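/- arXiv:2105.00871 — 9 statements merged into one kernel-verified Lean document; each statement's English description precedes it below -/
import Mathlib

section
/- Let P be a finite poset on {p_1,...,p_n} and let G(P) be the bipartite graph on {x_1,...,x_n} ∪ {y_1,...,y_n} with edges {x_i,y_j} exactly when p_i ≤ p_j. Then G(P) is a complete C-M bipartite graph (i.e., there is a permutation σ of [n] such that {x_{σ(i)}, y_{σ(j)}} ∈ E(G(P)) iff i ≤ j) if and only if P is a chain (totally ordered). -/
theorem Equiv.total_of_rel_iff_le {α β : Type*} [LinearOrder β] {r : α → α → Prop}
    (e : β ≃ α) (he : ∀ i j, r (e i) (e j) ↔ i ≤ j) : Std.Total r where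
  total a b := by
    simpa using (le_total (e.symm a) (e.symm b)).imp (he _ _).2 (he _ _).2

theorem exists_equiv_fin_rel_iff_le {α : Type*} [Fintype α] (r : α → α → Prop)
    [IsLinearOrder α r] {n : ℕ} (hn : Fintype.card α = n) :
    ∃ e : Fin n ≃ α, ∀ i j, r (e i) (e j) ↔ i ≤ j := by
  classical
  let : LinearOrder α :=
    { le := r
      le_refl := refl_of r
      le_trans := fun _ _ _ => trans_of r
      le_antisymm := fun _ _ => antisymm_of r
      le_total := total_of r
      toDecidableLE := inferInstance }
  exact ⟨(monoEquivOfFin α hn).toEquiv, fun _ _ => (monoEquivOfFin α hn).le_iff_le⟩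

/-- `G(P)` is a complete C-M bipartite graph iff the poset `P` is a chain. -/
theorem stmt1 (n : ℕ) (le : Fin n → Fin n → Prop) [IsPartialOrder (Fin n) le] :
    (∃ σ : Equiv.Perm (Fin n), ∀ i j : Fin n, le (σ i) (σ j) ↔ i ≤ j) ↔
      (∀ i j : Fin n, le i j ∨ le j i) := by
  constructor
  · rintro ⟨σ, hσ⟩
    exact (σ.total_of_rel_iff_le hσ).total
  · intro htot
    have : IsLinearOrder (Fin n) le := { total := htot }
    exact exists_equiv_fin_rel_iff_le le (Fintype.card_fin n)
end

section
/- Let G be a bipartite graph on {x_1,...,x_n} ∪ {y_1,...,y_n} satisfying: {x_i,y_i} ∈ E(G) for all i; if {x_i,y_j},{x_j,y_k} ∈ E(G) for distinct i,j,k then {x_i,y_k} ∈ E(G); and there is no pair i ≠ j with both {x_i,y_j} and {x_j,y_i} in E(G). Then there exists a permutation σ of [n] such that, after relabeling x_i ↦ x_{σ(i)}, y_i ↦ y_{σ(i)}, the graph satisfies: {x_i,y_i} ∈ E for all i; {x_i,y_j} ∈ E implies i ≤ j; and {x_i,y_j},{x_j,y_k} ∈ E with i < j < k implies {x_i,y_k}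 ∈ E. -/
/-!
The edge relation `E i j` (for `{x_i, y_j} ∈ E(G)`) is a partial order on `[n]`: reflexivity,
transitivity and antisymmetry are exactly the three hypotheses. Relabeling along a linear extension
of this order (Szpilrajn) makes every edge go from a smaller to a larger index.
-/

theorem isPartialOrder_of_distinct {α : Type*} {r : α → α → Prop} (refl : ∀ a, r a a)
    (trans : ∀ a b c, a ≠ b → b ≠ c → a ≠ c → r a b → r b c → r a c)
    (antisymm : ∀ a b, a ≠ b → ¬(r a b ∧ r b a)) : IsPartialOrder α r where
  refl := refl
  trans a b c hab hbc := by
    rcases eq_or_ne a b with rfl | h₁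
    · exact hbc
    rcases eq_or_ne b c with rfl | h₂
    · exact hab
    rcases eq_or_ne a c with rfl | h₃
    · exact refl a
    exact trans a b c h₁ h₂ h₃ hab hbc
  antisymm a b hab hba := by_contra fun h => antisymm a b h ⟨hab, hba⟩

theorem exists_equiv_fin_of_isPartialOrder {α : Type*} [Fintype α] (r : α → α → Prop)
    [IsPartialOrder α r] {k : ℕ} (hk : Fintype.card α = k) :
    ∃ e : Fin k ≃ α, ∀ i j, r (e i) (e j) → i ≤ j := by
  obtain ⟨s, hs, hrs⟩ := extend_partialOrder r
  let : LinearOrder α :=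
    { le := s
      le_refl := hs.refl
      le_trans := hs.trans
      le_antisymm := hs.antisymm
      le_total := hs.total
      toDecidableLE := Classical.decRel _ }
  let e := monoEquivOfFin α hk
  exact ⟨e.toEquiv, fun i j h => e.le_iff_le.mp (hrs _ _ h)⟩

/-- a bipartite graph satisfying Villarreal's conditions with no `K_{2,2}`
can be relabeled to satisfy the Herzog–Hibi conditions. -/
theorem stmt3 (n : ℕ) (E : Fin n → Fin n → Prop)
    (hrefl : ∀ i, E i i)
    (htrans : ∀ i j k : Fin n, i ≠ j → j ≠ k → i ≠ k → E i j → E j k → E i k)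
    (hanti : ∀ i j : Fin n, i ≠ j → ¬(E i j ∧ E j i)) :
    ∃ σ : Equiv.Perm (Fin n),
      (∀ i, E (σ i) (σ i)) ∧
      (∀ i j : Fin n, E (σ i) (σ j) → i ≤ j) ∧
      (∀ i j k : Fin n, i < j → j < k → E (σ i) (σ j) → E (σ j) (σ k) → E (σ i) (σ k)) := by
  have := isPartialOrder_of_distinct hrefl htrans hanti
  obtain ⟨σ, hσ⟩ := exists_equiv_fin_of_isPartialOrder E (Fintype.card_fin n)
  refine ⟨σ, fun i => hrefl _, hσ, fun i j k hij hjk => htrans _ _ _ ?_ ?_ ?_⟩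
  · exact σ.injective.ne hij.ne
  · exact σ.injective.ne hjk.ne
  · exact σ.injective.ne (hij.trans hjk).ne
end

section
/- Let G be an unmixed bipartite graph on V_n = {x_1,...,x_n} ∪ {y_1,...,y_n} (so {x_i,y_i} ∈ E(G) for all i, the transitivity condition holds, and every minimal vertex cover has size n). Suppose G has an induced subgraph K_{m,m} (m ≥ 2) on V_m = {x_1,...,x_m} ∪ {y_1,...,y_m}. Let H be the induced subgraph of G on V_n \ V_{m-1}, where V_{m-1} = {x_1,...,x_{m-1}} ∪ {y_1,...,y_{m-1}}. For every subset C ⊆ V_n \ V_{m-1} with x_m ∈ C: C is a minimal vertex cover of H if and only if C ∪ {x_1,...,x_m} is a minimal vertex cover of G. -/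
/-- `C` is a vertex cover of the bipartite graph with edge relation `E`
(vertex `Sum.inl i` is `x_{i+1}`, `Sum.inr j` is `y_{j+1}`). -/
def IsCover (n : ℕ) (E : Fin n → Fin n → Prop) (C : Set (Fin n ⊕ Fin n)) : Prop :=
  ∀ i j, E i j → Sum.inl i ∈ C ∨ Sum.inr j ∈ C

/-- `C` is a minimal vertex cover. -/
def IsMinCover (n : ℕ) (E : Fin n → Fin n → Prop) (C : Set (Fin n ⊕ Fin n)) : Prop :=
  IsCover n E C ∧ ∀ D ⊂ C, ¬ IsCover n E D

/-!
Reflexivity and transitivity make the edge relation a preorder. In a minimal cover of a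
transitive bipartite graph `x_i` and `y_i` are never both present: their private edges `x_k y_i`
and `x_i y_l` would leave the edge `x_k y_l` uncovered. So `y_m` lies in neither cover, and then
`D ↦ D ∪ {x_1, …, x_m}` matches covers of `H` containing `x_m` with covers of `G`: an edge
`x_i y_j` of `G` with `i > m` and `j < m` is dominated by the edge `x_i y_m` of `H`, since
`x_m y_j` is an edge of `K_{m,m}` and `E` is transitive. Minimality transfers because the loops
`x_a y_a` force `x_1, …, x_m` into every cover of `G` inside `C ∪ {x_1, …, x_m}`.
-/

section Covers

theorem isTrans_of_forall_ne {α : Type*} {r : α → α → Prop} (hrefl : ∀ a, r a a)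
    (htrans : ∀ a b c, a ≠ b → b ≠ c → a ≠ c → r a b → r b c → r a c) : IsTrans α r := by
  refine ⟨fun i j k hij hjk => ?_⟩
  by_cases h₁ : i = j
  · exact h₁ ▸ hjk
  by_cases h₂ : j = k
  · exact h₂ ▸ hij
  by_cases h₃ : i = k
  · exact h₃ ▸ hrefl i
  exact htrans i j k h₁ h₂ h₃ hij hjk

variable {n : ℕ} {E : Fin n → Fin n → Prop} {C D : Set (Fin n ⊕ Fin n)}

theorem IsCover.mono (hC : IsCover n E C) (hCD : C ⊆ D) : IsCover n E D :=
  fun i j hij => (hC i j hij).imp (@hCD _) (@hCD _)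

theorem IsMinCover.exists_adj_inr_notMem (hC : IsMinCover n E C) {i : Fin n}
    (hi : Sum.inl i ∈ C) : ∃ j, E i j ∧ Sum.inr j ∉ C := by
  by_contra! h
  refine hC.2 (C \ {Sum.inl i}) (Set.sdiff_singleton_ssubset.2 hi) fun a b hab => ?_
  by_cases ha : a = i
  · exact Or.inr ⟨h b (ha ▸ hab), Sum.inr_ne_inl⟩
  · exact (hC.1 a b hab).imp (fun h => ⟨h, by simpa using ha⟩) fun h => ⟨h, Sum.inr_ne_inl⟩

theorem IsMinCover.exists_adj_inl_notMem (hC : IsMinCover n E C) {j : Fin n}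
    (hj : Sum.inr j ∈ C) : ∃ i, E i j ∧ Sum.inl i ∉ C := by
  by_contra! h
  refine hC.2 (C \ {Sum.inr j}) (Set.sdiff_singleton_ssubset.2 hj) fun a b hab => ?_
  by_cases hb : b = j
  · exact Or.inl ⟨h a (hb ▸ hab), Sum.inl_ne_inr⟩
  · exact (hC.1 a b hab).imp (fun h => ⟨h, Sum.inl_ne_inr⟩) fun h => ⟨h, by simpa using hb⟩

theorem IsMinCover.inr_notMem_of_inl_mem [IsTrans (Fin n) E] (hC : IsMinCover n E C)
    {i : Fin n} (hi : Sum.inl i ∈ C) : Sum.inr i ∉ C := by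
  intro hi'
  obtain ⟨l, hil, hl⟩ := hC.exists_adj_inr_notMem hi
  obtain ⟨k, hki, hk⟩ := hC.exists_adj_inl_notMem hi'
  exact (hC.1 k l (_root_.trans hki hil)).elim hk hl

end Covers

section InducedAbove

variable {n : ℕ} {E : Fin n → Fin n → Prop} {μ : Fin n} {C D : Set (Fin n ⊕ Fin n)}

/-- The graph `H` of the paper, for `μ` the (zero-based) index of `x_m`. -/
def induceGe (E : Fin n → Fin n → Prop) (μ : Fin n) : Fin n → Fin n → Prop :=
  fun i j => E i j ∧ μ ≤ i ∧ μ ≤ j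

instance [IsTrans (Fin n) E] : IsTrans (Fin n) (induceGe E μ) :=
  ⟨fun _ _ _ hij hjk => ⟨_root_.trans hij.1 hjk.1, hij.2.1, hjk.2.2⟩⟩

theorem isCover_induceGe_iff [IsTrans (Fin n) E] (hμ : ∀ j < μ, E j μ)
    (hl : Sum.inl μ ∈ D) (hr : Sum.inr μ ∉ D) :
    IsCover n (induceGe E μ) D ↔ IsCover n E (D ∪ Sum.inl '' Set.Iic μ) := by
  constructor
  · intro hD i j hij
    by_cases hi : i ≤ μ
    · exact Or.inl (Or.inr ⟨i, hi, rfl⟩)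
    rw [not_le] at hi
    by_cases hj : μ ≤ j
    · exact (hD i j ⟨hij, hi.le, hj⟩).imp Or.inl Or.inl
    · have hiμ : E i μ := _root_.trans hij (hμ j (not_le.1 hj))
      exact Or.inl (Or.inl ((hD i μ ⟨hiμ, hi.le, le_rfl⟩).resolve_right hr))
  · rintro hD i j ⟨hij, hi, -⟩
    refine (hD i j hij).imp (fun h => h.elim id ?_) fun h => h.resolve_right ?_
    · rintro ⟨a, ha, hai⟩
      obtain rfl := Sum.inl_injective hai
      exact le_antisymm ha hi ▸ hl
    · rintro ⟨_, _, h⟩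
      exact Sum.inl_ne_inr h

theorem IsMinCover.union_image_inl_Iic [IsTrans (Fin n) E] (hrefl : ∀ i, E i i)
    (hμ : ∀ j < μ, E j μ) (hCr : ∀ j, Sum.inr j ∈ C → μ ≤ j) (hx : Sum.inl μ ∈ C)
    (hC : IsMinCover n (induceGe E μ) C) : IsMinCover n E (C ∪ Sum.inl '' Set.Iic μ) := by
  have hr : Sum.inr μ ∉ C := hC.inr_notMem_of_inl_mem hx
  refine ⟨(isCover_induceGe_iff hμ hx hr).1 hC.1, fun D hDlt hD => ?_⟩
  have hXD : Sum.inl '' Set.Iic μ ⊆ D := by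
    rintro _ ⟨a, ha, rfl⟩
    refine (hD a a (hrefl a)).resolve_right fun haD => ?_
    have haC : Sum.inr a ∈ C := (hDlt.1 haD).resolve_right (by simp)
    exact hr (le_antisymm ha (hCr a haC) ▸ haC)
  have hDC : IsCover n (induceGe E μ) (D ∩ C) := by
    have hl : Sum.inl μ ∈ D ∩ C := ⟨hXD ⟨μ, Set.self_mem_Iic, rfl⟩, hx⟩
    refine (isCover_induceGe_iff hμ hl fun h => hr h.2).2 (hD.mono ?_)
    intro v hv
    by_cases hvX : v ∈ Sum.inl '' Set.Iic μ
    · exact Or.inr hvX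
    · exact Or.inl ⟨hv, (hDlt.1 hv).resolve_right hvX⟩
  refine hC.2 _ ⟨Set.inter_subset_right, fun hCD => hDlt.2 ?_⟩ hDC
  exact Set.union_subset (fun v hv => (hCD hv).1) hXD

theorem IsMinCover.of_union_image_inl_Iic [IsTrans (Fin n) E] (hrefl : ∀ i, E i i)
    (hμ : ∀ j < μ, E j μ) (hCl : ∀ i, Sum.inl i ∈ C → μ ≤ i) (hx : Sum.inl μ ∈ C)
    (hC : IsMinCover n E (C ∪ Sum.inl '' Set.Iic μ)) : IsMinCover n (induceGe E μ) C := by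
  have hr : Sum.inr μ ∉ C := fun h => hC.inr_notMem_of_inl_mem (Or.inl hx) (Or.inl h)
  refine ⟨(isCover_induceGe_iff hμ hx hr).2 hC.1, fun D hDlt hD => ?_⟩
  have hrD : Sum.inr μ ∉ D := fun h => hr (hDlt.1 h)
  have hlD : Sum.inl μ ∈ D := (hD μ μ ⟨hrefl μ, le_rfl, le_rfl⟩).resolve_right hrD
  obtain ⟨v, hvC, hvD⟩ := Set.exists_of_ssubset hDlt
  have hlt : D ∪ Sum.inl '' Set.Iic μ ⊂ C ∪ Sum.inl '' Set.Iic μ := by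
    refine (Set.ssubset_iff_of_subset (Set.union_subset_union_left _ hDlt.1)).2
      ⟨v, Or.inl hvC, ?_⟩
    rintro (h | ⟨a, ha, rfl⟩)
    · exact hvD h
    · exact hvD (le_antisymm ha (hCl a hvC) ▸ hlD)
  exact hC.2 _ hlt ((isCover_induceGe_iff hμ hlD hrD).1 hD)

end InducedAbove

/-- for `C ⊆ V_n \ V_{m-1}` with `x_m ∈ C`, `C` is a minimal vertex cover of
`H` iff `C ∪ {x_1,…,x_m}` is a minimal vertex cover of `G`. -/
theorem stmt4 (n m : ℕ) (hm : 2 ≤ m) (hn : m ≤ n) (E : Fin n → Fin n → Prop)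
    (hrefl : ∀ i, E i i)
    (htrans : ∀ i j k : Fin n, i ≠ j → j ≠ k → i ≠ k → E i j → E j k → E i k)
    (hK : ∀ i j : Fin n, i.val < m → j.val < m → E i j)
    (C : Set (Fin n ⊕ Fin n))
    (hC : ∀ v ∈ C, m - 1 ≤ Sum.elim Fin.val Fin.val v)
    (hx : Sum.inl (⟨m - 1, by omega⟩ : Fin n) ∈ C) :
    IsMinCover n (fun i j => E i j ∧ m - 1 ≤ i.val ∧ m - 1 ≤ j.val) C ↔
      IsMinCover n E (C ∪ Sum.inl '' {i : Fin n | i.val < m}) := by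
  set μ : Fin n := ⟨m - 1, by omega⟩
  have := isTrans_of_forall_ne hrefl htrans
  have hμ : ∀ j < μ, E j μ := fun j (hj : j.val < m - 1) =>
    hK j μ (by omega) (show m - 1 < m by omega)
  have hX : {i : Fin n | i.val < m} = Set.Iic μ := by
    ext i
    simp only [Set.mem_ofPred_eq, Set.mem_Iic, Fin.le_def, μ]
    omega
  rw [hX]
  exact ⟨IsMinCover.union_image_inl_Iic hrefl hμ (fun j hj => hC _ hj) hx,
    IsMinCover.of_union_image_inl_Iic hrefl hμ (fun i hi => hC _ hi) hx⟩
end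

section
/- Let G be a connected unmixed bipartite graph on V_n = {x_1,...,x_n} ∪ {y_1,...,y_n} with an induced K_{m,m} (m ≥ 2) on {x_1,...,x_m} ∪ {y_1,...,y_m}, such that no other induced K_{r,r} (r ≥ 2) of the form {x_{i_1},...,x_{i_r}} ∪ {y_{i_1},...,y_{i_r}} exists outside this one. Then the induced subgraph H of G on V_n \ ({x_1,...,x_{m-1}} ∪ {y_1,...,y_{m-1}}) is connected. -/
/-!
Collapsing `x_1, …, x_{m-1}` onto `x_m` and `y_1, …, y_{m-1}` onto `y_m` maps edges to edges:
an edge `{x_i, y_j}` with `j < m` becomes `{x_i, y_m}`, which is an edge by transitivity through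
the complete block `K_{m,m}`. This collapse is a graph homomorphism from `G` onto `H` fixing `H`
pointwise, so it carries the connectedness of `G` over to `H`.
-/

/-- The simple bipartite graph on `Fin n ⊕ Fin n` with `x_i = Sum.inl i`, `y_j = Sum.inr j`,
and an edge `{x_i, y_j}` whenever `E i j`. -/
def bipGraph (n : ℕ) (E : Fin n → Fin n → Prop) : SimpleGraph (Fin n ⊕ Fin n) where
  Adj v w := (∃ i j, v = Sum.inl i ∧ w = Sum.inr j ∧ E i j) ∨
             (∃ i j, v = Sum.inr j ∧ w = Sum.inl i ∧ E i j)
  symm := by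
    refine ⟨?_⟩
    rintro v w (⟨i, j, h1, h2, h⟩ | ⟨i, j, h1, h2, h⟩)
    · exact Or.inr ⟨i, j, h2, h1, h⟩
    · exact Or.inl ⟨i, j, h2, h1, h⟩
  loopless := by
    refine ⟨?_⟩
    intro v h
    rcases h with ⟨i, j, h1, h2, _⟩ | ⟨i, j, h1, h2, _⟩ <;> subst h1 <;> simp_all

namespace SimpleGraph

variable {V : Type*} {G : SimpleGraph V} {s : Set V}

theorem Connected.induce_of_retraction (hG : G.Connected) (f : G →g G) (hfs : ∀ v, f v ∈ s)
    (hfix : ∀ v ∈ s, f v = v) : (G.induce s).Connected :=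
  let r : G →g G.induce s := ⟨fun v => ⟨f v, hfs v⟩, f.map_adj⟩
  hG.map r fun u => ⟨u, Subtype.ext (hfix u u.2)⟩

end SimpleGraph

theorem rel_collapse_of_rel {ι : Type*} {E : ι → ι → Prop} (hrefl : ∀ i, E i i)
    (htrans : ∀ i j k, i ≠ j → j ≠ k → i ≠ k → E i j → E j k → E i k)
    {p : ι → Prop} [DecidablePred p] {c : ι} (hc : ¬ p c) (hpc : ∀ i, p i → E i c ∧ E c i)
    {i j : ι} (hij : E i j) : E (if p i then c else i) (if p j then c else j) := by
  split_ifs with hi hj hj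
  · exact hrefl c
  · obtain rfl | hjc := eq_or_ne j c
    · exact hrefl j
    · exact htrans c i j (by rintro rfl; exact hc hi) (by rintro rfl; exact hj hi) hjc.symm
        (hpc i hi).2 hij
  · obtain rfl | hic := eq_or_ne i c
    · exact hrefl i
    · exact htrans i j c (by rintro rfl; exact hi hj) (by rintro rfl; exact hc hj) hic hij
        (hpc j hj).1
  · exact hij

def bipGraph.homOfRel {n : ℕ} {E : Fin n → Fin n → Prop} (g : Fin n → Fin n)
    (hg : ∀ i j, E i j → E (g i) (g j)) : bipGraph n E →g bipGraph n E where
  toFun := Sum.map g g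
  map_rel' := by
    rintro _ _ (⟨i, j, rfl, rfl, h⟩ | ⟨i, j, rfl, rfl, h⟩)
    · exact Or.inl ⟨g i, g j, rfl, rfl, hg i j h⟩
    · exact Or.inr ⟨g i, g j, rfl, rfl, hg i j h⟩

theorem stmt7_general (n m : ℕ) (hm : 2 ≤ m) (hn : m ≤ n) (E : Fin n → Fin n → Prop)
    (hrefl : ∀ i, E i i)
    (htrans : ∀ i j k : Fin n, i ≠ j → j ≠ k → i ≠ k → E i j → E j k → E i k)
    (hconn : (bipGraph n E).Connected)
    (hK : ∀ i j : Fin n, i.val < m → j.val < m → E i j) :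
    (SimpleGraph.induce {v : Fin n ⊕ Fin n | m - 1 ≤ Sum.elim Fin.val Fin.val v}
      (bipGraph n E)).Connected := by
  let M : Fin n := ⟨m - 1, by omega⟩
  let g : Fin n → Fin n := fun i => if i.val < m - 1 then M else i
  have hM : M.val = m - 1 := rfl
  have hg_ge : ∀ i, m - 1 ≤ (g i).val := fun i => by
    dsimp only [g]; split_ifs <;> omega
  have hg_fix : ∀ i : Fin n, m - 1 ≤ i.val → g i = i := fun i hi => if_neg (by omega)
  have hg : ∀ i j, E i j → E (g i) (g j) := fun i j =>
    rel_collapse_of_rel (p := fun i : Fin n => i.val < m - 1) hrefl htrans (by omega)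
      (fun i hi => ⟨hK i M (by omega) (by omega), hK M i (by omega) (by omega)⟩)
  refine hconn.induce_of_retraction (bipGraph.homOfRel g hg) ?_ ?_
  · rintro (i | i) <;> exact hg_ge i
  · rintro (i | i) hi
    · exact congrArg Sum.inl (hg_fix i hi)
    · exact congrArg Sum.inr (hg_fix i hi)

/-- if the connected unmixed bipartite graph `G` has an induced `K_{m,m}`
on `{x_1,…,x_m} ∪ {y_1,…,y_m}` and every induced `K_{r,r}` (`r ≥ 2`) of the given form lives
inside it, then the induced subgraph `H` on `V_n \ ({x_1,…,x_{m-1}} ∪ {y_1,…,y_{m-1}})`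
is connected. -/
theorem stmt7 (n m : ℕ) (hm : 2 ≤ m) (hn : m ≤ n) (E : Fin n → Fin n → Prop)
    (hrefl : ∀ i, E i i)
    (htrans : ∀ i j k : Fin n, i ≠ j → j ≠ k → i ≠ k → E i j → E j k → E i k)
    (hone : ∀ C : Set (Fin n ⊕ Fin n), (∀ i j, E i j → Sum.inl i ∈ C ∨ Sum.inr j ∈ C) →
      (∀ D ⊂ C, ¬ ∀ i j, E i j → Sum.inl i ∈ D ∨ Sum.inr j ∈ D) → C.ncard = n)
    (hconn : (bipGraph n E).Connected)
    (hK : ∀ i j : Fin n, i.val < m → j.val < m → E i j)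
    (huniq : ∀ r : ℕ, 2 ≤ r → ∀ f : Fin r → Fin n, Function.Injective f →
      (∀ a b : Fin r, E (f a) (f b)) → ∀ a, (f a).val < m) :
    (SimpleGraph.induce {v : Fin n ⊕ Fin n | m - 1 ≤ Sum.elim Fin.val Fin.val v}
      (bipGraph n E)).Connected :=
  stmt7_general n m hm hn E hrefl htrans hconn hK
end

section
/- Let H be a connected Cohen-Macaulay bipartite graph on {x_m,...,x_n} ∪ {y_m,...,y_n} satisfying the Herzog–Hibi labeling conditions: {x_i,y_i} ∈ E(H) for all m ≤ i ≤ n; {x_i,y_j} ∈ E(H) implies i ≤ j; and {x_i,y_j},{x_j,y_k} ∈ E(H) with i < j < k implies {x_i,y_k} ∈ E(H). Then for every j with m ≤ j ≤ n, the set {x_m,...,x_j, y_{j+1},...,y_n} is a minimal vertex cover of H, and so is {y_m,...,y_n}. -/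
/-- `C` is a vertex cover of the bipartite graph with edge relation `E` on natural-number
indexed vertices (`Sum.inl i` is `x_i`, `Sum.inr j` is `y_j`). -/
def IsCoverN (E : ℕ → ℕ → Prop) (C : Set (ℕ ⊕ ℕ)) : Prop :=
  ∀ i j, E i j → Sum.inl i ∈ C ∨ Sum.inr j ∈ C

/-- `C` is a minimal vertex cover. -/
def IsMinCoverN (E : ℕ → ℕ → Prop) (C : Set (ℕ ⊕ ℕ)) : Prop :=
  IsCoverN E C ∧ ∀ D ⊂ C, ¬ IsCoverN E D

/-- for a connected C-M bipartite graph `H` on `{x_m,…,x_n} ∪ {y_m,…,y_n}`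
with the Herzog–Hibi labeling conditions, each set `{x_m,…,x_j, y_{j+1},…,y_n}`
(`m ≤ j ≤ n`) is a minimal vertex cover, and so is `{y_m,…,y_n}`. -/
theorem stmt8 (m n : ℕ) (hmn : m ≤ n) (E : ℕ → ℕ → Prop)
    (hrange : ∀ i j, E i j → m ≤ i ∧ i ≤ j ∧ j ≤ n)
    (hrefl : ∀ i, m ≤ i → i ≤ n → E i i)
    (htrans : ∀ i j k, i < j → j < k → E i j → E j k → E i k) :
    (∀ j, m ≤ j → j ≤ n →
      IsMinCoverN E
        (Sum.inl '' {i | m ≤ i ∧ i ≤ j} ∪ Sum.inr '' {k | j < k ∧ k ≤ n})) ∧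
    IsMinCoverN E (Sum.inr '' {i | m ≤ i ∧ i ≤ n}) := by
  constructor
  · intro j hmj hjn
    constructor
    · intro i k hik
      obtain ⟨hmi, hik', hkn⟩ := hrange i k hik
      by_cases h : i ≤ j
      · exact Or.inl (Or.inl ⟨i, ⟨hmi, h⟩, rfl⟩)
      · exact Or.inr (Or.inr ⟨k, ⟨lt_of_lt_of_le (not_le.mp h) hik', hkn⟩, rfl⟩)
    · rintro D ⟨hDC, hne⟩ hD
      obtain ⟨v, hvC, hvD⟩ := Set.exists_of_ssubset ⟨hDC, hne⟩
      rcases hvC with ⟨i, ⟨hmi, hij⟩, rfl⟩ | ⟨k, ⟨hjk, hkn⟩, rfl⟩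
      · rcases hD i i (hrefl i hmi (hij.trans hjn)) with h | h
        · exact hvD h
        · rcases hDC h with ⟨_, ⟨_, _⟩, h'⟩ | ⟨k, ⟨hjk, _⟩, h'⟩
          · exact absurd h' (by simp)
          · exact absurd hij (Sum.inr.inj h' ▸ hjk).not_ge
      · rcases hD k k (hrefl k (hmj.trans hjk.le) hkn) with h | h
        · rcases hDC h with ⟨i, ⟨_, hij⟩, h'⟩ | ⟨_, _, h'⟩
          · exact absurd (Sum.inl.inj h' ▸ hij) hjk.not_ge
          · exact absurd h' (by simp)
        · exact hvD h
  · constructor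
    · intro i k hik
      obtain ⟨hmi, hik', hkn⟩ := hrange i k hik
      exact Or.inr ⟨k, ⟨hmi.trans hik', hkn⟩, rfl⟩
    · rintro D ⟨hDC, hne⟩ hD
      obtain ⟨v, hvC, hvD⟩ := Set.exists_of_ssubset ⟨hDC, hne⟩
      obtain ⟨k, ⟨hmk, hkn⟩, rfl⟩ := hvC
      rcases hD k k (hrefl k hmk hkn) with h | h
      · obtain ⟨_, _, h'⟩ := hDC h
        exact absurd h' (by simp)
      · exact hvD h
end

section
/- Let G be a complete C-M bipartite graph on {x_1,...,x_n} ∪ {y_1,...,y_n}, i.e., {x_i,y_j} ∈ E(G) iff i ≤ j. Then the minimal vertex covers of G are exactly the sets {x_1,...,x_j} ∪ {y_{j+1},...,y_n} for j = 0,1,...,n. In particular, G has exactly n+1 minimal vertex covers, all of cardinality n. -/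
/-!
Every cover `C` of the graph `x_i ~ y_k ⟺ i ≤ k` contains one of the covers
`{x_i | i < j} ∪ {y_k | j ≤ k}`: take `j` least with `x_j ∉ C`; then the edges `x_j y_k`, `k ≥ j`,
force `y_k ∈ C`. Conversely these sets are minimal covers because they
contain exactly one endpoint of each edge `x_i y_i`, which also makes each of them of size `n`.
-/

open Set

/-- `{x_1,…,x_j} ∪ {y_{j+1},…,y_n}`, with `0`-based indices. -/
def splitCover (n j : ℕ) : Set (Fin n ⊕ Fin n) :=
  Sum.inl '' {i : Fin n | i.val < j} ∪ Sum.inr '' {i : Fin n | j ≤ i.val}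

variable {n : ℕ} {E : Fin n → Fin n → Prop}

@[simp]
lemma inl_mem_splitCover {j : ℕ} {i : Fin n} : Sum.inl i ∈ splitCover n j ↔ i.val < j := by
  simp [splitCover]

@[simp]
lemma inr_mem_splitCover {j : ℕ} {i : Fin n} : Sum.inr i ∈ splitCover n j ↔ j ≤ i.val := by
  simp [splitCover]

lemma isCover_splitCover (hE : ∀ i k, E i k → i ≤ k) (j : ℕ) : IsCover n E (splitCover n j) := by
  intro i k hik
  by_cases hij : i.val < j
  · exact Or.inl (inl_mem_splitCover.2 hij)
  · exact Or.inr (inr_mem_splitCover.2 (by have := Fin.le_def.1 (hE i k hik); omega))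

lemma IsCover.exists_splitCover_subset (hE : ∀ i k, i ≤ k → E i k) {C : Set (Fin n ⊕ Fin n)}
    (hC : IsCover n E C) : ∃ j ≤ n, splitCover n j ⊆ C := by
  classical
  let P : ℕ → Prop := fun m => ∀ h : m < n, Sum.inl ⟨m, h⟩ ∉ C
  have hPn : P n := fun h => absurd h (lt_irrefl n)
  refine ⟨Nat.find ⟨n, hPn⟩, Nat.find_min' _ hPn, ?_⟩
  rintro (i | k) hmem
  · have : ¬ P i := Nat.find_min _ (inl_mem_splitCover.1 hmem)
    simpa [P, not_forall] using this
  · have hjk := inr_mem_splitCover.1 hmem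
    have hj : Nat.find ⟨n, hPn⟩ < n := lt_of_le_of_lt hjk k.isLt
    exact (hC _ k (hE _ _ (Fin.le_def.2 hjk))).resolve_left (Nat.find_spec ⟨n, hPn⟩ hj)

lemma IsCover.eq_of_subset (hrefl : ∀ i, E i i) {C D : Set (Fin n ⊕ Fin n)}
    (hC : ∀ i, Sum.inl i ∈ C → Sum.inr i ∉ C) (hD : IsCover n E D) (hDC : D ⊆ C) : D = C := by
  refine hDC.antisymm ?_
  rintro (i | i) hi
  · exact (hD i i (hrefl i)).resolve_right fun h => hC i hi (hDC h)
  · exact (hD i i (hrefl i)).resolve_left fun h => hC i (hDC h) hi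

lemma isMinCover_iff (hE : ∀ i k, E i k ↔ i ≤ k) (C : Set (Fin n ⊕ Fin n)) :
    IsMinCover n E C ↔ ∃ j ≤ n, C = splitCover n j := by
  have hcover := isCover_splitCover fun i k => (hE i k).1
  have hmin (j : ℕ) {D} (hD : IsCover n E D) (hDC : D ⊆ splitCover n j) : D = splitCover n j :=
    hD.eq_of_subset (fun i => (hE i i).2 le_rfl)
      (fun i hl hr => by simp only [inl_mem_splitCover, inr_mem_splitCover] at hl hr; omega) hDC
  constructor
  · rintro ⟨hC, hCmin⟩
    obtain ⟨j, hj, hjC⟩ := hC.exists_splitCover_subset fun i k => (hE i k).2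
    exact ⟨j, hj, (hjC.eq_or_ssubset.resolve_right fun h => hCmin _ h (hcover j)).symm⟩
  · rintro ⟨j, -, rfl⟩
    exact ⟨hcover j, fun D hD hDcov => hD.ne (hmin j hDcov hD.subset)⟩

lemma splitCover_injOn : InjOn (splitCover n) (Iic n) := by
  intro j hj k hk hjk
  have key (i : Fin n) : i.val < j ↔ i.val < k := by
    simpa using Set.ext_iff.1 hjk (Sum.inl i)
  simp only [mem_Iic] at hj hk
  by_contra hne
  rcases Nat.lt_or_gt_of_ne hne with h | h
  · exact lt_irrefl j ((key ⟨j, by omega⟩).2 h)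
  · exact lt_irrefl k ((key ⟨k, by omega⟩).1 h)

lemma ncard_splitCover (j : ℕ) : (splitCover n j).ncard = n := by
  have hcompl : {i : Fin n | j ≤ i.val} = {i : Fin n | i.val < j}ᶜ := by
    ext i; simp
  rw [splitCover, ncard_union_eq, ncard_image_of_injective _ Sum.inl_injective,
    ncard_image_of_injective _ Sum.inr_injective, hcompl, ncard_add_ncard_compl, Nat.card_fin]
  exact disjoint_left.2 <| by rintro _ ⟨a, -, rfl⟩ ⟨b, -, hb⟩; exact Sum.inr_ne_inl hb

/-- the minimal vertex covers of the complete C-M bipartite graph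
(`{x_i,y_j} ∈ E ⟺ i ≤ j`) are exactly the sets `{x_1,…,x_j} ∪ {y_{j+1},…,y_n}` for
`j = 0,…,n`; there are exactly `n+1` of them, each of cardinality `n`. -/
theorem stmt10 (n : ℕ) (E : Fin n → Fin n → Prop) (hE : ∀ i j, E i j ↔ i ≤ j) :
    (∀ C, IsMinCover n E C ↔
      ∃ j ≤ n, C = Sum.inl '' {i : Fin n | i.val < j} ∪ Sum.inr '' {i : Fin n | j ≤ i.val}) ∧
    {C | IsMinCover n E C}.ncard = n + 1 ∧
    (∀ C, IsMinCover n E C → C.ncard = n) := by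
  have hchar := isMinCover_iff hE
  have hset : {C | IsMinCover n E C} = splitCover n '' Iic n := by
    ext C
    simp only [mem_ofPred_eq, hchar, mem_image, mem_Iic, eq_comm]
  refine ⟨hchar, ?_, ?_⟩
  · rw [hset, splitCover_injOn.ncard_image, ncard_Iic_nat]
  · intro C hC
    obtain ⟨j, -, rfl⟩ := (hchar C).1 hC
    exact ncard_splitCover j
end

section
/- Let u₁,...,u_s and v₁,...,v_t be monomials in variables {x_{m+1},...,x_n, y_{m+1},...,y_n}, and let X = x₁···x_m, Y = y₁···y_m. Suppose the monomials x_m u₁,...,x_m u_s, y_m v₁,...,y_m v_t are pairwise distinct squarefree monomials of the same degree forming a minimal generating set. Then for I = (u₁,...,u_s)·X + (v₁,...,v_t)·Y and J = (u₁,...,u_s)·x_m + (v₁,...,v_t)·y_m, one has μ(I) = μ(J) and μ(I²) = μ(J²), where μ denotes the number of minimal monomial generators. -/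
/-- `μ(I)`: the minimal number of generators of the ideal `I`. -/
noncomputable def mu {R : Type*} [CommRing R] (I : Ideal R) : ℕ :=
  sInf {c | ∃ s : Finset R, s.card = c ∧ Ideal.span (s : Set R) = I}

open MvPolynomial

lemma mu_map_le {R S : Type*} [CommRing R] [CommRing S] (f : R →+* S) (I : Ideal R)
    (hfg : I.FG) : mu (Ideal.map f I) ≤ mu I := by
  classical
  have hne : {c | ∃ s : Finset R, s.card = c ∧ Ideal.span (s : Set R) = I}.Nonempty := by
    obtain ⟨s, hs⟩ := hfg
    exact ⟨s.card, s, rfl, hs⟩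
  obtain ⟨s, hcard, hspan⟩ := Nat.sInf_mem hne
  have h1 : mu (Ideal.map f I) ≤ (s.image f).card := by
    apply Nat.sInf_le
    refine ⟨s.image f, rfl, ?_⟩
    rw [Finset.coe_image, ← Ideal.map_span, hspan]
  exact h1.trans (le_trans (Finset.card_image_le) (le_of_eq hcard))

lemma aeval_monomial_one_of_fixed {k σ : Type*} [Field k] (g : σ → MvPolynomial σ k)
    (w : σ →₀ ℕ) (h : ∀ a, w a ≠ 0 → g a = X a) :
    MvPolynomial.aeval g (monomial w (1 : k)) = monomial w (1 : k) := by
  rw [aeval_monomial, map_one, one_mul]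
  rw [monomial_eq, map_one, one_mul]
  apply Finsupp.prod_congr
  intro a ha
  rw [h a (Finsupp.mem_support_iff.mp ha)]

/-- with `X = x₁⋯x_m`, `Y = y₁⋯y_m`, monomials `u_i, v_j` in the variables
`x_{m+1},…,x_n, y_{m+1},…,y_n` (squarefree, all `x_m u_i, y_m v_j` distinct and of the same
degree), the ideals `I = (u₁,…,u_s)X + (v₁,…,v_t)Y` and
`J = (u₁,…,u_s)x_m + (v₁,…,v_t)y_m` satisfy `μ(I) = μ(J)` and `μ(I²) = μ(J²)`.
Here the ring is `k[x₁,…,x_n,y₁,…,y_n]` with `x_{i+1} = X (Sum.inl i)`,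
`y_{j+1} = X (Sum.inr j)`, and monomials are encoded by exponent vectors. -/
theorem stmt13 (k : Type*) [Field k] (n m s t d : ℕ) (hm : 1 ≤ m) (hn : m ≤ n)
    (u : Fin s → ((Fin n ⊕ Fin n) →₀ ℕ)) (v : Fin t → ((Fin n ⊕ Fin n) →₀ ℕ))
    (husupp : ∀ i a, u i a ≠ 0 → m ≤ Sum.elim Fin.val Fin.val a)
    (hvsupp : ∀ j a, v j a ≠ 0 → m ≤ Sum.elim Fin.val Fin.val a)
    (husf : ∀ i a, u i a ≤ 1) (hvsf : ∀ j a, v j a ≤ 1)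
    (hudeg : ∀ i, (u i).sum (fun _ e => e) = d)
    (hvdeg : ∀ j, (v j).sum (fun _ e => e) = d)
    (huinj : Function.Injective u) (hvinj : Function.Injective v)
    (I J : Ideal (MvPolynomial (Fin n ⊕ Fin n) k))
    (hI : I = Ideal.span
      ((Set.range fun i => (monomial (u i) (1 : k)) *
          ∏ a ∈ Finset.univ.filter (fun a : Fin n => a.val < m), X (Sum.inl a)) ∪
       (Set.range fun j => (monomial (v j) (1 : k)) *
          ∏ a ∈ Finset.univ.filter (fun a : Fin n => a.val < m), X (Sum.inr a))))
    (hJ : J = Ideal.span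
      ((Set.range fun i => (monomial (u i) (1 : k)) * X (Sum.inl (⟨m - 1, by omega⟩ : Fin n))) ∪
       (Set.range fun j => (monomial (v j) (1 : k)) * X (Sum.inr (⟨m - 1, by omega⟩ : Fin n))))) :
    mu I = mu J ∧ mu (I ^ 2) = mu (J ^ 2) := by
  classical
  set R := MvPolynomial (Fin n ⊕ Fin n) k
  set xm : Fin n := ⟨m - 1, by omega⟩ with hxm
  set P : R := ∏ a ∈ Finset.univ.filter (fun a : Fin n => a.val < m), X (Sum.inl a) with hP
  set Q : R := ∏ a ∈ Finset.univ.filter (fun a : Fin n => a.val < m), X (Sum.inr a) with hQ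
  set φg : (Fin n ⊕ Fin n) → R :=
    Sum.elim (fun a => if a.val + 1 < m then 1 else X (Sum.inl a))
      (fun a => if a.val + 1 < m then 1 else X (Sum.inr a)) with hφg
  set ψg : (Fin n ⊕ Fin n) → R :=
    Sum.elim (fun a => if a.val + 1 = m then P else X (Sum.inl a))
      (fun a => if a.val + 1 = m then Q else X (Sum.inr a)) with hψg
  set φ : R →+* R := (MvPolynomial.aeval φg).toRingHom with hφ
  set ψ : R →+* R := (MvPolynomial.aeval ψg).toRingHom with hψ
  -- φ fixes monomials supported in high variables
  have hφmono : ∀ w : (Fin n ⊕ Fin n) →₀ ℕ, (∀ a, w a ≠ 0 → m ≤ Sum.elim Fin.val Fin.val a) →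
      φ (monomial w (1 : k)) = monomial w (1 : k) := by
    intro w hw
    apply aeval_monomial_one_of_fixed
    intro a ha
    have := hw a ha
    rcases a with b | b <;> simp only [hφg, Sum.elim_inl, Sum.elim_inr, Sum.elim_inl] at this ⊢ <;>
      rw [if_neg (by omega)]
  have hψmono : ∀ w : (Fin n ⊕ Fin n) →₀ ℕ, (∀ a, w a ≠ 0 → m ≤ Sum.elim Fin.val Fin.val a) →
      ψ (monomial w (1 : k)) = monomial w (1 : k) := by
    intro w hw
    apply aeval_monomial_one_of_fixed
    intro a ha
    have := hw a ha
    rcases a with b | b <;> simp only [hψg, Sum.elim_inl, Sum.elim_inr] at this ⊢ <;>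
      rw [if_neg (by omega)]
  have hxval : (xm : ℕ) = m - 1 := rfl
  have hφX : ∀ a, φ (X a) = φg a := fun a => aeval_X φg a
  have hψX : ∀ a, ψ (X a) = ψg a := fun a => aeval_X ψg a
  have hmem : xm ∈ Finset.univ.filter (fun a : Fin n => a.val < m) := by
    simp only [Finset.mem_filter, Finset.mem_univ, true_and]; omega
  -- φ collapses P to x_m and Q to y_m
  have hφP : φ P = X (Sum.inl xm) := by
    rw [hP, map_prod]
    have h1 : ∀ b ∈ Finset.univ.filter (fun a : Fin n => a.val < m), b ≠ xm →
        φ (X (Sum.inl b)) = 1 := by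
      intro b hb hbne
      have hb' : b.val < m := by simpa using hb
      have hbv : b.val ≠ m - 1 := fun h => hbne (Fin.ext (h.trans hxval.symm))
      rw [hφX, hφg, Sum.elim_inl, if_pos (by omega)]
    have h2 : φ (X (Sum.inl xm)) = X (Sum.inl xm) := by
      rw [hφX, hφg, Sum.elim_inl, if_neg (by omega)]
    rw [Finset.prod_eq_single_of_mem xm hmem h1, h2]
  have hφQ : φ Q = X (Sum.inr xm) := by
    rw [hQ, map_prod]
    have h1 : ∀ b ∈ Finset.univ.filter (fun a : Fin n => a.val < m), b ≠ xm →
        φ (X (Sum.inr b)) = 1 := by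
      intro b hb hbne
      have hb' : b.val < m := by simpa using hb
      have hbv : b.val ≠ m - 1 := fun h => hbne (Fin.ext (h.trans hxval.symm))
      rw [hφX, hφg, Sum.elim_inr, if_pos (by omega)]
    have h2 : φ (X (Sum.inr xm)) = X (Sum.inr xm) := by
      rw [hφX, hφg, Sum.elim_inr, if_neg (by omega)]
    rw [Finset.prod_eq_single_of_mem xm hmem h1, h2]
  -- ψ expands x_m to P and y_m to Q
  have hψx : ψ (X (Sum.inl xm)) = P := by
    rw [hψX, hψg, Sum.elim_inl, if_pos (by omega)]
  have hψy : ψ (X (Sum.inr xm)) = Q := by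
    rw [hψX, hψg, Sum.elim_inr, if_pos (by omega)]
  -- the two ideal maps
  have hmapI : Ideal.map φ I = J := by
    rw [hI, hJ, Ideal.map_span, Set.image_union, ← Set.range_comp, ← Set.range_comp]
    have e1 : (⇑φ ∘ fun i => (monomial (u i) (1 : k)) * P)
        = fun i => (monomial (u i) (1 : k)) * X (Sum.inl xm) := by
      funext i
      simp only [Function.comp_apply]
      rw [map_mul, hφmono (u i) (husupp i), hφP]
    have e2 : (⇑φ ∘ fun j => (monomial (v j) (1 : k)) * Q)
        = fun j => (monomial (v j) (1 : k)) * X (Sum.inr xm) := by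
      funext j
      simp only [Function.comp_apply]
      rw [map_mul, hφmono (v j) (hvsupp j), hφQ]
    rw [e1, e2]
  have hmapJ : Ideal.map ψ J = I := by
    rw [hI, hJ, Ideal.map_span, Set.image_union, ← Set.range_comp, ← Set.range_comp]
    have e1 : (⇑ψ ∘ fun i => (monomial (u i) (1 : k)) * X (Sum.inl xm))
        = fun i => (monomial (u i) (1 : k)) * P := by
      funext i
      simp only [Function.comp_apply]
      rw [map_mul, hψmono (u i) (husupp i), hψx]
    have e2 : (⇑ψ ∘ fun j => (monomial (v j) (1 : k)) * X (Sum.inr xm))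
        = fun j => (monomial (v j) (1 : k)) * Q := by
      funext j
      simp only [Function.comp_apply]
      rw [map_mul, hψmono (v j) (hvsupp j), hψy]
    rw [e1, e2]
  have hfgI : I.FG := IsNoetherian.noetherian I
  have hfgJ : J.FG := IsNoetherian.noetherian J
  have hfgI2 : (I ^ 2).FG := IsNoetherian.noetherian (I ^ 2)
  have hfgJ2 : (J ^ 2).FG := IsNoetherian.noetherian (J ^ 2)
  constructor
  · refine le_antisymm ?_ ?_
    · calc mu I = mu (Ideal.map ψ J) := by rw [hmapJ]
        _ ≤ mu J := mu_map_le ψ J hfgJ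
    · calc mu J = mu (Ideal.map φ I) := by rw [hmapI]
        _ ≤ mu I := mu_map_le φ I hfgI
  · refine le_antisymm ?_ ?_
    · calc mu (I ^ 2) = mu (Ideal.map ψ (J ^ 2)) := by rw [Ideal.map_pow, hmapJ]
        _ ≤ mu (J ^ 2) := mu_map_le ψ (J ^ 2) hfgJ2
    · calc mu (J ^ 2) = mu (Ideal.map φ (I ^ 2)) := by rw [Ideal.map_pow, hmapI]
        _ ≤ mu (I ^ 2) := mu_map_le φ (I ^ 2) hfgI2
end

section
/- Let G be a bipartite graph on {x_1,...,x_n} ∪ {y_1,...,y_n} such that every minimal vertex cover of G has the form {x_i : i ∈ S} ∪ {y_i : i ∉ S} for some subset S ⊆ [n] (one vertex from each pair). Then the collection L_G = {S ⊆ [n] : {x_i : i ∈ S} ∪ {y_i : i ∉ S} is a minimal vertex cover of G} is closed under unions and intersections, contains ∅, and contains [n]; i.e., L_G is a sublattice of the Boolean lattice on [n] containing the top and bottom elements. -/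
/-- if every minimal vertex cover of `G` has the form
`{x_i : i ∈ S} ∪ {y_i : i ∉ S}`, then
`L_G = {S : {x_i : i ∈ S} ∪ {y_i : i ∉ S} is a minimal vertex cover}` contains `∅` and `[n]`
and is closed under unions and intersections. -/
theorem stmt14 (n : ℕ) (E : Fin n → Fin n → Prop)
    (hrefl : ∀ i, E i i)
    (htrans : ∀ i j k : Fin n, i ≠ j → j ≠ k → i ≠ k → E i j → E j k → E i k)
    (hform : ∀ C, IsMinCover n E C →
      ∃ S : Set (Fin n), C = Sum.inl '' S ∪ Sum.inr '' Sᶜ) :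
    (∅ : Set (Fin n)) ∈ {S | IsMinCover n E (Sum.inl '' S ∪ Sum.inr '' Sᶜ)} ∧
    (Set.univ : Set (Fin n)) ∈ {S | IsMinCover n E (Sum.inl '' S ∪ Sum.inr '' Sᶜ)} ∧
    ∀ S T : Set (Fin n),
      S ∈ {S | IsMinCover n E (Sum.inl '' S ∪ Sum.inr '' Sᶜ)} →
      T ∈ {S | IsMinCover n E (Sum.inl '' S ∪ Sum.inr '' Sᶜ)} →
      (S ∪ T) ∈ {S | IsMinCover n E (Sum.inl '' S ∪ Sum.inr '' Sᶜ)} ∧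
      (S ∩ T) ∈ {S | IsMinCover n E (Sum.inl '' S ∪ Sum.inr '' Sᶜ)} := by
  have memiff : ∀ S : Set (Fin n),
      IsMinCover n E (Sum.inl '' S ∪ Sum.inr '' Sᶜ) ↔
      (∀ i j, E i j → i ∈ S ∨ j ∉ S) := by
    intro S
    constructor
    · rintro ⟨hc, -⟩ i j hij
      rcases hc i j hij with h | h
      · left
        rcases h with ⟨a, ha, hae⟩ | ⟨a, ha, hae⟩
        · cases hae; exact ha
        · exact absurd hae (by simp)
      · right
        rcases h with ⟨a, ha, hae⟩ | ⟨a, ha, hae⟩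
        · exact absurd hae (by simp)
        · cases hae; exact ha
    · intro h
      refine ⟨?_, ?_⟩
      · intro i j hij
        rcases h i j hij with hi | hj
        · exact Or.inl (Or.inl ⟨i, hi, rfl⟩)
        · exact Or.inr (Or.inr ⟨j, hj, rfl⟩)
      · rintro D ⟨hsub, hne⟩ hD
        apply hne
        rintro x (⟨a, ha, rfl⟩ | ⟨a, ha, rfl⟩)
        · rcases hD a a (hrefl a) with h1 | h1
          · exact h1
          · rcases hsub h1 with ⟨b, hb, hbe⟩ | ⟨b, hb, hbe⟩
            · exact absurd hbe (by simp)
            · cases hbe; exact absurd ha hb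
        · rcases hD a a (hrefl a) with h1 | h1
          · rcases hsub h1 with ⟨b, hb, hbe⟩ | ⟨b, hb, hbe⟩
            · cases hbe; exact absurd hb ha
            · exact absurd hbe (by simp)
          · exact h1
  refine ⟨?_, ?_, ?_⟩
  · rw [Set.mem_setOf_eq, memiff]
    intro i j _
    exact Or.inr (by simp)
  · rw [Set.mem_setOf_eq, memiff]
    intro i j _
    exact Or.inl (Set.mem_univ i)
  · intro S T hS hT
    rw [Set.mem_setOf_eq, memiff] at hS hT
    constructor
    · rw [Set.mem_setOf_eq, memiff]
      intro i j hij
      rcases hS i j hij with hi | hj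
      · exact Or.inl (Or.inl hi)
      · rcases hT i j hij with hi | hj'
        · exact Or.inl (Or.inr hi)
        · exact Or.inr (by simp [hj, hj'])
    · rw [Set.mem_setOf_eq, memiff]
      intro i j hij
      rcases hS i j hij with hi | hj
      · rcases hT i j hij with hi' | hj'
        · exact Or.inl ⟨hi, hi'⟩
        · exact Or.inr (by simp [hj'])
      · exact Or.inr (by simp [hj])
end

section
/- Let G be an unmixed bipartite graph on V_n = {x_1,...,x_n} ∪ {y_1,...,y_n} with an induced K_{m,m} (m ≥ 2) on V_m = {x_1,...,x_m} ∪ {y_1,...,y_m}, and let H be the induced subgraph on {x_m,...,x_n} ∪ {y_m,...,y_n}. Then G and H have the same number of minimal vertex covers. -/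
/-!
Indices are `0`-based, so `x_m, y_m` are `inl p, inr p` with `p = m - 1`; `upper p` holds the
vertices `x_k, y_k` with `k ≥ p`, and `restrictUpper E p` is the edge relation of `H`.

A minimal cover `C` of `H` contains exactly one of `x_p, y_p`: if it contained both, dropping
either would uncover edges `x_p y_j` and `x_i y_p` with `x_i, y_j ∉ C`, and `x_i y_j` (a loop or
obtained by transitivity) would be uncovered. If `x_p ∈ C`, then `C ∪ {x_k | k < p}` covers `G`,
because for an edge `x_i y_j` with `j < p ≤ i` transitivity through the edge `x_j y_p` of
`K_{m,m}` gives the edge `x_i y_p` of `H`, covered by `x_i`; it is minimal since each `x_k` with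
`k < p` is needed for `x_k y_p`. Conversely a minimal cover of `G` contains all `x_k` or all
`y_k` with `k ≤ p`, as `K_{m,m}` is complete, and then by unmixedness none of the others; so it is
recovered from its trace on `upper p`, which is a minimal cover of `H`. The case `y_p ∈ C` is the
mirror image under exchanging the `x`'s and the `y`'s, i.e. `flip E` and `Sum.swap`.
-/

open Set Sum

variable {n : ℕ} {E R : Fin n → Fin n → Prop} {p : Fin n} {C D : Set (Fin n ⊕ Fin n)}

def TransOnDistinct (E : Fin n → Fin n → Prop) : Prop :=
  ∀ a b c, a ≠ b → b ≠ c → a ≠ c → E a b → E b c → E a c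

theorem TransOnDistinct.flip (h : TransOnDistinct E) : TransOnDistinct (flip E) :=
  fun _ _ _ hab hbc hac h₁ h₂ => h _ _ _ hbc.symm hab.symm hac.symm h₂ h₁

def upper (p : Fin n) : Set (Fin n ⊕ Fin n) := {v | (p : ℕ) ≤ Sum.elim Fin.val Fin.val v}

@[simp]
theorem inl_mem_upper {k : Fin n} : inl k ∈ upper p ↔ p ≤ k := Iff.rfl

@[simp]
theorem inr_mem_upper {k : Fin n} : inr k ∈ upper p ↔ p ≤ k := Iff.rfl

def restrictUpper (E : Fin n → Fin n → Prop) (p : Fin n) : Fin n → Fin n → Prop :=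
  fun i j => E i j ∧ p ≤ i ∧ p ≤ j

theorem flip_restrictUpper : flip (restrictUpper E p) = restrictUpper (flip E) p := by
  ext i j
  exact and_congr_right' and_comm

theorem preimage_swap_upper : Sum.swap ⁻¹' upper p = upper p := by
  ext (k | k) <;> rfl

theorem preimage_swap_image_inl {α : Type*} (s : Set α) :
    Sum.swap ⁻¹' (inl '' s : Set (α ⊕ α)) = inr '' s := by
  ext (k | k) <;> simp

theorem image_inl_Iio_inter_upper : (inl '' Iio p ∩ upper p : Set (Fin n ⊕ Fin n)) = ∅ := by
  ext (k | k) <;> simp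

theorem image_inr_Iio_inter_upper : (inr '' Iio p ∩ upper p : Set (Fin n ⊕ Fin n)) = ∅ := by
  ext (k | k) <;> simp

theorem IsCover.preimage_swap (hC : IsCover n E C) : IsCover n (flip E) (Sum.swap ⁻¹' C) :=
  fun i j hij => (hC j i hij).symm

theorem IsMinCover.preimage_swap (hC : IsMinCover n E C) :
    IsMinCover n (flip E) (Sum.swap ⁻¹' C) := by
  refine ⟨hC.1.preimage_swap, fun D hD hDcov => hC.2 (Sum.swap ⁻¹' D) ?_ hDcov.preimage_swap⟩
  exact ⟨fun v hv => by simpa using hD.1 hv, fun h => hD.2 fun v hv => by simpa using h hv⟩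

theorem IsMinCover.exists_edge_inl (hC : IsMinCover n R C) {i : Fin n} (hi : inl i ∈ C) :
    ∃ j, R i j ∧ inr j ∉ C := by
  by_contra! H
  refine hC.2 (C \ {inl i}) (sdiff_singleton_ssubset.2 hi) fun a b hab => ?_
  rcases hC.1 a b hab with ha | hb
  · obtain rfl | hai := eq_or_ne a i
    · exact Or.inr ⟨H b hab, by simp⟩
    · exact Or.inl ⟨ha, by simpa using hai⟩
  · exact Or.inr ⟨hb, by simp⟩

theorem IsMinCover.exists_edge_inr (hC : IsMinCover n R C) {j : Fin n} (hj : inr j ∈ C) :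
    ∃ i, R i j ∧ inl i ∉ C :=
  hC.preimage_swap.exists_edge_inl hj

theorem IsMinCover.not_inl_mem_and_inr_mem (hrefl : ∀ i, E i i) (htrans : TransOnDistinct E)
    (hC : IsMinCover n (restrictUpper E p) C) (k : Fin n) : ¬ (inl k ∈ C ∧ inr k ∈ C) := by
  rintro ⟨hl, hr⟩
  obtain ⟨j, ⟨hkj, -, hj⟩, hjC⟩ := hC.exists_edge_inl hl
  obtain ⟨i, ⟨hik, hi, -⟩, hiC⟩ := hC.exists_edge_inr hr
  have hij : E i j := by
    obtain rfl | hne := eq_or_ne i j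
    · exact hrefl i
    · exact htrans i k j (fun h => hiC (h ▸ hl)) (fun h => hjC (h ▸ hr)) hne hik hkj
  exact (hC.1 i j ⟨hij, hi, hj⟩).elim hiC hjC

theorem IsCover.restrictUpper_inter_upper (hD : IsCover n E D) :
    IsCover n (restrictUpper E p) (D ∩ upper p) :=
  fun i j ⟨hij, hi, hj⟩ => (hD i j hij).imp (⟨·, hi⟩) (⟨·, hj⟩)

theorem IsCover.forall_inl_mem_or_forall_inr_mem (hK : ∀ i ≤ p, ∀ j ≤ p, E i j)
    (hD : IsCover n E D) : (∀ k ≤ p, inl k ∈ D) ∨ (∀ k ≤ p, inr k ∈ D) := by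
  by_contra! h
  obtain ⟨⟨i, hi, hiD⟩, j, hj, hjD⟩ := h
  exact (hD i j (hK i hi j hj)).elim hiD hjD

theorem IsCover.union_image_inl_Iio (hK : ∀ i ≤ p, ∀ j ≤ p, E i j)
    (htrans : TransOnDistinct E)
    (hC : IsCover n (restrictUpper E p) C) (hp : inl p ∈ C) (hp' : inr p ∉ C) :
    IsCover n E (C ∪ inl '' Iio p) := by
  intro i j hij
  rcases lt_or_ge i p with hi | hi
  · exact Or.inl (Or.inr ⟨i, hi, rfl⟩)
  rcases lt_or_ge j p with hj | hj
  · refine Or.inl (Or.inl ?_)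
    obtain rfl | hip := eq_or_ne i p
    · exact hp
    have hEip : E i p := htrans i j p (hj.trans_le hi).ne' hj.ne hip hij (hK j hj.le p le_rfl)
    exact (hC i p ⟨hEip, hi, le_rfl⟩).resolve_right hp'
  · exact (hC i j ⟨hij, hi, hj⟩).imp Or.inl Or.inl

theorem IsMinCover.union_image_inl_Iio (hK : ∀ i ≤ p, ∀ j ≤ p, E i j)
    (htrans : TransOnDistinct E) (hC : IsMinCover n (restrictUpper E p) C) (hp : inl p ∈ C)
    (hp' : inr p ∉ C) : IsMinCover n E (C ∪ inl '' Iio p) := by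
  refine ⟨hC.1.union_image_inl_Iio hK htrans hp hp', fun D hD hDcov => ?_⟩
  obtain ⟨v, hv, hvD⟩ := exists_of_ssubset hD
  rcases hv with hvC | ⟨k, hk, rfl⟩
  · refine hC.2 (D ∩ upper p) ⟨fun w ⟨hwD, hwu⟩ => ?_, fun h => hvD (h hvC).1⟩
      hDcov.restrictUpper_inter_upper
    exact (hD.1 hwD).resolve_right fun hw => image_inl_Iio_inter_upper.subset ⟨hw, hwu⟩
  · rcases hDcov k p (hK k hk.le p le_rfl) with h | h
    · exact hvD h
    · exact (hD.1 h).elim hp' (by simp)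

theorem IsMinCover.union_image_inr_Iio (hK : ∀ i ≤ p, ∀ j ≤ p, E i j)
    (htrans : TransOnDistinct E) (hC : IsMinCover n (restrictUpper E p) C) (hp : inr p ∈ C)
    (hp' : inl p ∉ C) : IsMinCover n E (C ∪ inr '' Iio p) := by
  have hC' : IsMinCover n (restrictUpper (flip E) p) (Sum.swap ⁻¹' C) :=
    flip_restrictUpper ▸ hC.preimage_swap
  have := (hC'.union_image_inl_Iio (E := flip E) (fun i hi j hj => hK j hj i hi) htrans.flip
    hp hp').preimage_swap
  simpa [preimage_preimage, preimage_swap_image_inl] using this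

theorem inter_upper_union_image_inl_Iio (hx : ∀ k ≤ p, inl k ∈ D)
    (hy : ∀ k ≤ p, inr k ∉ D) :
    D ∩ upper p ∪ inl '' Iio p = D := by
  ext (k | k) <;> rcases lt_or_ge k p with hk | hk
  · simpa [hk] using hx k hk.le
  · simp [hk]
  · simp [hy k hk.le]
  · simp [hk]

theorem inter_upper_union_image_inr_Iio (hy : ∀ k ≤ p, inr k ∈ D)
    (hx : ∀ k ≤ p, inl k ∉ D) :
    D ∩ upper p ∪ inr '' Iio p = D := by
  have := congrArg (Sum.swap ⁻¹' ·)
    (inter_upper_union_image_inl_Iio (D := Sum.swap ⁻¹' D) hy hx)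
  simpa [preimage_preimage, preimage_swap_upper, preimage_swap_image_inl] using this

theorem IsMinCover.inter_upper_of_forall_inl_mem (hK : ∀ i ≤ p, ∀ j ≤ p, E i j)
    (htrans : TransOnDistinct E) (hD : IsMinCover n E D) (hx : ∀ k ≤ p, inl k ∈ D)
    (hy : ∀ k ≤ p, inr k ∉ D) : IsMinCover n (restrictUpper E p) (D ∩ upper p) := by
  refine ⟨hD.1.restrictUpper_inter_upper, fun D' hD' hcov => ?_⟩
  have hp' : inr p ∉ D' := fun h => hy p le_rfl (hD'.1 h).1
  have hp : inl p ∈ D' := (hcov p p ⟨hK p le_rfl p le_rfl, le_rfl, le_rfl⟩).resolve_right hp'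
  obtain ⟨v, ⟨hvD, hvu⟩, hvD'⟩ := exists_of_ssubset hD'
  refine hD.2 (D' ∪ inl '' Iio p) ⟨?_, fun h => ?_⟩
    (hcov.union_image_inl_Iio hK htrans hp hp')
  · rw [← inter_upper_union_image_inl_Iio hx hy]
    exact union_subset_union_left _ hD'.1
  · rcases h hvD with h | h
    · exact hvD' h
    · exact image_inl_Iio_inter_upper.subset ⟨h, hvu⟩

theorem IsMinCover.inter_upper_of_forall_inr_mem (hK : ∀ i ≤ p, ∀ j ≤ p, E i j)
    (htrans : TransOnDistinct E) (hD : IsMinCover n E D) (hy : ∀ k ≤ p, inr k ∈ D)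
    (hx : ∀ k ≤ p, inl k ∉ D) : IsMinCover n (restrictUpper E p) (D ∩ upper p) := by
  have := (hD.preimage_swap.inter_upper_of_forall_inl_mem (E := flip E)
    (fun i hi j hj => hK j hj i hi) htrans.flip hy hx).preimage_swap
  rw [← flip_restrictUpper] at this
  simpa [preimage_preimage, preimage_swap_upper] using this

open Classical in
noncomputable def extendCover (p : Fin n) (C : Set (Fin n ⊕ Fin n)) : Set (Fin n ⊕ Fin n) :=
  if inl p ∈ C then C ∪ inl '' Iio p else C ∪ inr '' Iio p

theorem extendCover_inter_upper (hC : C ⊆ upper p) : extendCover p C ∩ upper p = C := by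
  unfold extendCover
  split_ifs <;>
    simp [union_inter_distrib_right, inter_eq_left.2 hC, image_inl_Iio_inter_upper,
      image_inr_Iio_inter_upper]

theorem isMinCover_extendCover (hrefl : ∀ i, E i i) (htrans : TransOnDistinct E)
    (hK : ∀ i ≤ p, ∀ j ≤ p, E i j) (hC : IsMinCover n (restrictUpper E p) C) :
    IsMinCover n E (extendCover p C) := by
  have hnot := hC.not_inl_mem_and_inr_mem hrefl htrans p
  unfold extendCover
  split_ifs with hp
  · exact hC.union_image_inl_Iio hK htrans hp fun h => hnot ⟨hp, h⟩
  · have hp' : inr p ∈ C := (hC.1 p p ⟨hrefl p, le_rfl, le_rfl⟩).resolve_left hp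
    exact hC.union_image_inr_Iio hK htrans hp' hp

theorem IsMinCover.extendCover_inter_upper (hK : ∀ i ≤ p, ∀ j ≤ p, E i j)
    (htrans : TransOnDistinct E) (hD : IsMinCover n E D)
    (hone : ∀ k, inl k ∈ D ↔ inr k ∉ D) :
    IsMinCover n (restrictUpper E p) (D ∩ upper p) ∧ extendCover p (D ∩ upper p) = D := by
  unfold extendCover
  rcases hD.1.forall_inl_mem_or_forall_inr_mem hK with hx | hy
  · have hy k hk : inr k ∉ D := (hone k).1 (hx k hk)
    rw [if_pos ⟨hx p le_rfl, inl_mem_upper.2 le_rfl⟩]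
    exact ⟨hD.inter_upper_of_forall_inl_mem hK htrans hx hy,
      inter_upper_union_image_inl_Iio hx hy⟩
  · have hx k hk : inl k ∉ D := fun h => (hone k).1 h (hy k hk)
    rw [if_neg fun h => hx p le_rfl h.1]
    exact ⟨hD.inter_upper_of_forall_inr_mem hK htrans hy hx,
      inter_upper_union_image_inr_Iio hy hx⟩

theorem ncard_isMinCover_restrictUpper (hrefl : ∀ i, E i i) (htrans : TransOnDistinct E)
    (hone : ∀ C, IsMinCover n E C → ∀ k, (inl k ∈ C ↔ inr k ∉ C))
    (hK : ∀ i ≤ p, ∀ j ≤ p, E i j) :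
    {C | IsMinCover n (restrictUpper E p) C ∧ C ⊆ upper p}.ncard =
      {C | IsMinCover n E C}.ncard := by
  refine BijOn.ncard_eq (f := extendCover p)
    (InvOn.bijOn (f' := (· ∩ upper p)) ⟨?_, ?_⟩ ?_ ?_)
  · exact fun C hC => extendCover_inter_upper hC.2
  · exact fun D hD => (hD.extendCover_inter_upper hK htrans (hone D hD)).2
  · exact fun C hC => isMinCover_extendCover hrefl htrans hK hC.1
  · exact fun D hD =>
      ⟨(hD.extendCover_inter_upper hK htrans (hone D hD)).1, inter_subset_right⟩

theorem stmt18_general (n m : ℕ) (hm : 2 ≤ m) (hn : m ≤ n) (E : Fin n → Fin n → Prop)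
    (hrefl : ∀ i, E i i)
    (htrans : ∀ a b c : Fin n, a ≠ b → b ≠ c → a ≠ c → E a b → E b c → E a c)
    (hone : ∀ C, IsMinCover n E C → ∀ k, (Sum.inl k ∈ C ↔ Sum.inr k ∉ C))
    (hK : ∀ i j : Fin n, i.val < m → j.val < m → E i j) :
    {C | IsMinCover n (fun i j => E i j ∧ m - 1 ≤ i.val ∧ m - 1 ≤ j.val) C ∧
        ∀ v ∈ C, m - 1 ≤ Sum.elim Fin.val Fin.val v}.ncard =
      {C | IsMinCover n E C}.ncard :=
  ncard_isMinCover_restrictUpper (p := ⟨m - 1, by omega⟩) hrefl htrans hone fun i hi j hj =>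
    hK i j (Nat.lt_of_le_sub_one (by omega) hi) (Nat.lt_of_le_sub_one (by omega) hj)

/-- `G` (with induced `K_{m,m}` on the first `m` pairs) and the induced
subgraph `H` on `{x_m,…,x_n} ∪ {y_m,…,y_n}` have the same number of minimal vertex
covers. -/
theorem stmt18 (n m : ℕ) (hm : 2 ≤ m) (hn : m ≤ n) (E : Fin n → Fin n → Prop)
    (hrefl : ∀ i, E i i)
    (htrans : ∀ a b c : Fin n, a ≠ b → b ≠ c → a ≠ c → E a b → E b c → E a c)
    (hone : ∀ C, IsMinCover n E C → ∀ k, (Sum.inl k ∈ C ↔ Sum.inr k ∉ C))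
    (hcard : ∀ C, IsMinCover n E C → C.ncard = n)
    (hK : ∀ i j : Fin n, i.val < m → j.val < m → E i j) :
    {C | IsMinCover n (fun i j => E i j ∧ m - 1 ≤ i.val ∧ m - 1 ≤ j.val) C ∧
        ∀ v ∈ C, m - 1 ≤ Sum.elim Fin.val Fin.val v}.ncard =
      {C | IsMinCover n E C}.ncard :=
  stmt18_general n m hm hn E hrefl htrans hone hK
end
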